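/- Let A be a ring, A₀ a subring with retraction π : A → A₀, A₊ = ker π, such that every finitely generated right A-module M with M·A₊ = M is zero. Then the functors S = - ⊗_{A₀} A and T = - ⊗_A A₀ induce mutually inverse bijections between the set of isomorphism classes of finitely generated projective right A₀-modules and the set of isomorphism classes of finitely generated projective right A-modules. -/

import Mathlib

/-!
Write `T(M) = M/M·A₊` and `Q^π` (`Restrict π Q`) for an `A₀`-module `Q` regarded as an
`A`-module through `π`.
`T` is left adjoint to restriction along `π`, and `S` to restriction along `A₀ ⊆ A`; both
restrictions preserve surjections, so `S` and `T` preserve projectivity, while finiteness is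
clear. The `A`-linear map `S(Q) → Q^π` extending the identity of `Q` descends to an inverse of
`Q → TS(Q)`. For `P`, extend a section `u : T(P) → P` of `P → T(P)` to `α : ST(P) → P`. It is onto
modulo `P·A₊`, hence onto by Nakayama, so it splits; and `T(α)` is invertible, so `ker α` is a
finitely generated direct summand `K` with `K = K·A₊`, hence zero.
-/

universe u

/-- Universal property of `Q ⊗_{A₀} A` (for left modules, `A ⊗_{A₀} Q`). -/
def IsBaseChangeAlong (A : Type u) [Ring A] (A₀ : Subring A)
    (Q : Type u) [AddCommGroup Q] [Module A₀ Q]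
    (E : Type u) [AddCommGroup E] [Module A E] (ι : Q →ₗ[A₀] E) : Prop :=
  ∀ (N : Type u) [AddCommGroup N] [Module A N] (f : Q →ₗ[A₀] N),
    ∃! F : E →ₗ[A] N, ∀ q : Q, F (ι q) = f q

/-- The submodule `N·A₊` (for left modules: `A₊·N`), where `A₊ = ker π`;
`N ⧸ kerSMulSubmodule π N` realises the functor `T = - ⊗_A A₀`. -/
def kerSMulSubmodule {A : Type u} [Ring A] {A₀ : Subring A} (π : A →+* A₀)
    (N : Type u) [AddCommGroup N] [Module A N] : Submodule A N :=
  Submodule.span A {x : N | ∃ a ∈ RingHom.ker π, ∃ m : N, x = a • m}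

open Submodule

section KerSMul

variable {A : Type u} [Ring A] {A₀ : Subring A} (π : A →+* A₀)
variable {M N : Type u} [AddCommGroup M] [Module A M] [AddCommGroup N] [Module A N]

theorem smul_mem_kerSMulSubmodule {a : A} (ha : a ∈ RingHom.ker π) (m : M) :
    a • m ∈ kerSMulSubmodule π M :=
  subset_span ⟨a, ha, m, rfl⟩

theorem kerSMulSubmodule_le_iff {p : Submodule A M} :
    kerSMulSubmodule π M ≤ p ↔ ∀ a ∈ RingHom.ker π, ∀ m : M, a • m ∈ p := by
  refine ⟨fun h a ha m => h (smul_mem_kerSMulSubmodule π ha m), fun h => span_le.2 ?_⟩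
  rintro _ ⟨a, ha, m, rfl⟩
  exact h a ha m

theorem map_kerSMulSubmodule_le (g : M →ₗ[A] N) :
    (kerSMulSubmodule π M).map g ≤ kerSMulSubmodule π N := by
  rw [map_le_iff_le_comap, kerSMulSubmodule_le_iff]
  intro a ha m
  simpa using smul_mem_kerSMulSubmodule π ha (g m)

variable {π} (hπ : ∀ x : A₀, π (x : A) = x)
include hπ

theorem smul_quotient_kerSMulSubmodule_eq (a : A) (x : M ⧸ kerSMulSubmodule π M) :
    a • x = (π a : A) • x := by
  obtain ⟨m, rfl⟩ := Submodule.Quotient.mk_surjective _ x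
  rw [← Submodule.Quotient.mk_smul, ← Submodule.Quotient.mk_smul, Submodule.Quotient.eq,
    ← sub_smul]
  exact smul_mem_kerSMulSubmodule π (by simp [RingHom.mem_ker, hπ]) m

theorem restrictScalars_span_kerSMulSubmodule (s : Set (M ⧸ kerSMulSubmodule π M)) :
    (span A s).restrictScalars A₀ = span A₀ s := by
  refine le_antisymm (fun x hx => ?_) (span_le_restrictScalars A₀ A s)
  induction hx using span_induction with
  | mem y hy => exact subset_span hy
  | zero => exact zero_mem _
  | add y z _ _ hy hz => exact add_mem hy hz
  | smul a y _ hy =>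
    rw [smul_quotient_kerSMulSubmodule_eq hπ]
    exact (span A₀ s).smul_mem (π a) hy

theorem finite_quotient_kerSMulSubmodule [Module.Finite A M] :
    Module.Finite A₀ (M ⧸ kerSMulSubmodule π M) := by
  obtain ⟨s, hs⟩ := Module.Finite.fg_top (R := A) (M := M ⧸ kerSMulSubmodule π M)
  exact ⟨s, by rw [← restrictScalars_span_kerSMulSubmodule hπ, hs, restrictScalars_top]⟩

end KerSMul

def Restrict {A : Type u} [Ring A] {A₀ : Subring A} (_π : A →+* A₀) (Q : Type u) : Type u := Q

namespace Restrict

variable {A : Type u} [Ring A] {A₀ : Subring A} (π : A →+* A₀)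
variable {Q Q' : Type u} [AddCommGroup Q] [Module A₀ Q] [AddCommGroup Q'] [Module A₀ Q']

instance : AddCommGroup (Restrict π Q) := inferInstanceAs (AddCommGroup Q)

instance : Module A (Restrict π Q) := Module.compHom Q π

theorem smul_def (a : A) (x : Restrict π Q) : a • x = (π a • show Q from x : Q) :=
  rfl

def map (f : Q →ₗ[A₀] Q') : Restrict π Q →ₗ[A] Restrict π Q' where
  toFun := f
  map_add' := f.map_add
  map_smul' a := f.map_smul (π a)

variable {M : Type u} [AddCommGroup M] [Module A M]

theorem kerSMulSubmodule_le_ker (f : M →ₗ[A] Restrict π Q) :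
    kerSMulSubmodule π M ≤ LinearMap.ker f := by
  rw [kerSMulSubmodule_le_iff]
  intro a ha m
  rw [LinearMap.mem_ker, f.map_smul, smul_def, RingHom.mem_ker.1 ha, zero_smul]
  rfl

variable {π} (hπ : ∀ x : A₀, π (x : A) = x)
include hπ

def equiv : Q ≃ₗ[A₀] Restrict π Q where
  toFun q := q
  invFun q := q
  map_add' _ _ := rfl
  map_smul' c q := by
    change c • q = π (c : A) • q
    rw [hπ]
  left_inv _ := rfl
  right_inv _ := rfl

def liftKerSMul (f : M →ₗ[A] Restrict π Q) : M ⧸ kerSMulSubmodule π M →ₗ[A₀] Q :=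
  (equiv hπ).symm.toLinearMap ∘ₗ
    ((kerSMulSubmodule π M).liftQ f (kerSMulSubmodule_le_ker π f)).restrictScalars A₀

def mkKerSMul : M →ₗ[A] Restrict π (M ⧸ kerSMulSubmodule π M) where
  toFun m := Submodule.Quotient.mk m
  map_add' _ _ := rfl
  map_smul' a m := by
    rw [Submodule.Quotient.mk_smul, smul_quotient_kerSMulSubmodule_eq hπ]
    rfl

end Restrict

theorem projective_quotient_kerSMulSubmodule {A : Type u} [Ring A] {A₀ : Subring A}
    {π : A →+* A₀} (hπ : ∀ x : A₀, π (x : A) = x) {M : Type u} [AddCommGroup M] [Module A M]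
    [Module.Projective A M] : Module.Projective A₀ (M ⧸ kerSMulSubmodule π M) := by
  refine .of_lifting_property'' fun f hf => ?_
  obtain ⟨g, hg⟩ :=
    Module.projective_lifting_property (Restrict.map π f) (Restrict.mkKerSMul hπ) hf
  refine ⟨Restrict.liftKerSMul hπ g, LinearMap.ext fun x => ?_⟩
  obtain ⟨m, rfl⟩ := Submodule.Quotient.mk_surjective _ x
  exact LinearMap.congr_fun hg m

namespace IsBaseChangeAlong

variable {A : Type u} [Ring A] {A₀ : Subring A} {Q : Type u} [AddCommGroup Q] [Module A₀ Q]
variable {E : Type u} [AddCommGroup E] [Module A E] {ι : Q →ₗ[A₀] E}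
variable (h : IsBaseChangeAlong A A₀ Q E ι)
include h

theorem ext {N : Type u} [AddCommGroup N] [Module A N] {F G : E →ₗ[A] N}
    (hFG : ∀ q, F (ι q) = G (ι q)) : F = G :=
  (h N (G.restrictScalars A₀ ∘ₗ ι)).unique hFG fun _ => rfl

theorem span_range_eq_top : span A (Set.range ι) = ⊤ := by
  have hmkQ : (span A (Set.range ι)).mkQ = 0 :=
    h.ext fun q => (Submodule.Quotient.mk_eq_zero _).2 (subset_span ⟨q, rfl⟩)
  simpa using congrArg LinearMap.ker hmkQ

theorem finite [Module.Finite A₀ Q] : Module.Finite A E := by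
  obtain ⟨S, hSfin, hS⟩ := fg_def.1 (Module.Finite.fg_top (R := A₀) (M := Q))
  refine Module.finite_def.2 (fg_def.2 ⟨ι '' S, hSfin.image ι, eq_top_iff.2 ?_⟩)
  have hrange : Set.range ι ⊆ span A₀ (ι '' S) := by
    rw [← map_span, hS, ← LinearMap.range_eq_map, LinearMap.coe_range]
  rw [← h.span_range_eq_top, span_le]
  exact hrange.trans (span_le_restrictScalars A₀ A _)

theorem projective [Module.Projective A₀ Q] : Module.Projective A E := by
  refine .of_lifting_property'' fun f hf => ?_
  obtain ⟨g, hg⟩ := Module.projective_lifting_property (f.restrictScalars A₀) ι hf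
  obtain ⟨G, hG⟩ := (h _ g).exists
  exact ⟨G, h.ext fun q => by rw [LinearMap.comp_apply, hG, ← hg]; rfl⟩

theorem exists_linearEquiv_quotient_kerSMulSubmodule {π : A →+* A₀}
    (hπ : ∀ x : A₀, π (x : A) = x) :
    ∃ e : Q ≃ₗ[A₀] (E ⧸ kerSMulSubmodule π E), ∀ q, e q = Submodule.Quotient.mk (ι q) := by
  obtain ⟨r, hr⟩ := (h _ (Restrict.equiv hπ).toLinearMap).exists
  let e₀ := (kerSMulSubmodule π E).mkQ.restrictScalars A₀ ∘ₗ ι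
  have hinv : Function.LeftInverse (Restrict.liftKerSMul hπ r) e₀ := hr
  have hspan : span A (Set.range e₀) = ⊤ := by
    rw [LinearMap.coe_comp, Set.range_comp, LinearMap.coe_restrictScalars, ← map_span,
      h.span_range_eq_top, Submodule.map_top, range_mkQ]
  have hsurj : Function.Surjective e₀ := by
    rw [← LinearMap.range_eq_top, ← span_eq (LinearMap.range e₀), LinearMap.coe_range,
      ← restrictScalars_span_kerSMulSubmodule hπ, hspan, restrictScalars_top]
  exact ⟨.ofBijective e₀ ⟨hinv.injective, hsurj⟩, fun _ => rfl⟩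

end IsBaseChangeAlong

section Nakayama

variable {A : Type u} [Ring A] {A₀ : Subring A} {π : A →+* A₀}
variable (hNak : ∀ (M : Type u) [AddCommGroup M] [Module A M], Module.Finite A M →
  kerSMulSubmodule π M = ⊤ → Subsingleton M)
variable {M : Type u} [AddCommGroup M] [Module A M] [Module.Finite A M]
include hNak

theorem eq_top_of_sup_kerSMulSubmodule_eq_top {p : Submodule A M}
    (hp : p ⊔ kerSMulSubmodule π M = ⊤) : p = ⊤ := by
  have htop : kerSMulSubmodule π (M ⧸ p) = ⊤ := by
    rw [eq_top_iff, ← range_mkQ p, LinearMap.range_eq_map, ← hp, Submodule.map_sup, mkQ_map_self,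
      bot_sup_eq]
    exact map_kerSMulSubmodule_le π p.mkQ
  exact Submodule.Quotient.subsingleton_iff.1 (hNak _ inferInstance htop)

theorem ker_eq_bot_of_le_kerSMulSubmodule {N : Type u} [AddCommGroup N] [Module A N]
    {f : M →ₗ[A] N} {g : N →ₗ[A] M} (hfg : f ∘ₗ g = LinearMap.id)
    (hker : LinearMap.ker f ≤ kerSMulSubmodule π M) : LinearMap.ker f = ⊥ := by
  let ρ : M →ₗ[A] LinearMap.ker f := LinearMap.codRestrict _ (LinearMap.id - g ∘ₗ f) fun m => by
    simp [← LinearMap.comp_apply f g, hfg]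
  have hρ : ∀ k : LinearMap.ker f, ρ k = k := fun k => Subtype.ext (by simp [ρ])
  have : Module.Finite A (LinearMap.ker f) := .of_surjective ρ fun k => ⟨k, hρ k⟩
  have htop : kerSMulSubmodule π (LinearMap.ker f) = ⊤ := eq_top_iff.2 fun k _ =>
    hρ k ▸ map_kerSMulSubmodule_le π ρ (mem_map_of_mem (hker k.2))
  exact Submodule.subsingleton_iff_eq_bot.1 (hNak _ inferInstance htop)

end Nakayama

theorem nonempty_linearEquiv_of_isBaseChangeAlong_quotient {A : Type u} [Ring A]
    {A₀ : Subring A} {π : A →+* A₀} (hπ : ∀ x : A₀, π (x : A) = x)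
    (hNak : ∀ (M : Type u) [AddCommGroup M] [Module A M], Module.Finite A M →
      kerSMulSubmodule π M = ⊤ → Subsingleton M)
    {P : Type u} [AddCommGroup P] [Module A P] [Module.Finite A P] [Module.Projective A P]
    {E : Type u} [AddCommGroup E] [Module A E] {ι : P ⧸ kerSMulSubmodule π P →ₗ[A₀] E}
    (h : IsBaseChangeAlong A A₀ _ E ι) : Nonempty (E ≃ₗ[A] P) := by
  have := projective_quotient_kerSMulSubmodule hπ (M := P)
  have := finite_quotient_kerSMulSubmodule hπ (M := P)
  have := h.finite
  obtain ⟨u, hu⟩ := Module.projective_lifting_property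
    ((kerSMulSubmodule π P).mkQ.restrictScalars A₀) LinearMap.id
    (Submodule.Quotient.mk_surjective _)
  have hu' (x) : Submodule.Quotient.mk (u x) = x := LinearMap.congr_fun hu x
  obtain ⟨α, hα⟩ := (h P u).exists
  have hsurj : Function.Surjective α := by
    rw [← LinearMap.range_eq_top]
    refine eq_top_of_sup_kerSMulSubmodule_eq_top hNak (eq_top_iff.2 fun p _ => ?_)
    have hp : p - u (Submodule.Quotient.mk p) ∈ kerSMulSubmodule π P := by
      rw [← Submodule.Quotient.mk_eq_zero, Submodule.Quotient.mk_sub, hu', sub_self]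
    simpa using add_mem_sup (LinearMap.mem_range.2 ⟨ι (Submodule.Quotient.mk p), hα _⟩) hp
  obtain ⟨v, hv⟩ := Module.projective_lifting_property α LinearMap.id hsurj
  obtain ⟨e, he⟩ := h.exists_linearEquiv_quotient_kerSMulSubmodule hπ
  let Tα := (mapQ _ _ α (map_le_iff_le_comap.1 (map_kerSMulSubmodule_le π α))).restrictScalars A₀
  have hTα (x) : e (Tα x) = x := by
    obtain ⟨q, rfl⟩ := e.surjective x
    congr 1
    rw [he]
    change Submodule.Quotient.mk (α (ι q)) = q
    rw [hα, hu']
  have hker : LinearMap.ker α ≤ kerSMulSubmodule π E := fun m hm => by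
    rw [← Submodule.Quotient.mk_eq_zero, ← hTα (Submodule.Quotient.mk m)]
    change e (Submodule.Quotient.mk (α m)) = 0
    rw [LinearMap.mem_ker.1 hm, Submodule.Quotient.mk_zero, map_zero]
  exact ⟨.ofBijective α ⟨LinearMap.ker_eq_bot.1
    (ker_eq_bot_of_le_kerSMulSubmodule hNak hv hker), hsurj⟩⟩
/-- Swan's theorem for a ring retraction: if `π : A → A₀` is a retraction onto the subring
`A₀`, `A₊ = ker π`, and every finitely generated `A`-module `M` with `M·A₊ = M` vanishes,
then the base-change functor `S = - ⊗_{A₀} A` and the functor `T = - ⊗_A A₀`, i.e. `M ↦ M/M·A₊`,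
induce mutually inverse bijections between isomorphism classes of finitely generated
projective `A₀`-modules and finitely generated projective `A`-modules: `S` and `T`
preserve finite generation and projectivity, `T(S(Q)) ≅ Q` naturally, and `S(T(P)) ≅ P`. -/
theorem swan_retraction (A : Type u) [Ring A] (A₀ : Subring A) (π : A →+* A₀)
    (hπ : ∀ x : A₀, π (x : A) = x)
    (hNak : ∀ (M : Type u) [AddCommGroup M] [Module A M], Module.Finite A M →
      kerSMulSubmodule π M = ⊤ → Subsingleton M) :
    (∀ (Q : Type u) [AddCommGroup Q] [Module A₀ Q], Module.Finite A₀ Q →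
      Module.Projective A₀ Q →
      ∀ (E : Type u) [AddCommGroup E] [Module A E] (ι : Q →ₗ[A₀] E),
        IsBaseChangeAlong A A₀ Q E ι →
          Module.Finite A E ∧ Module.Projective A E ∧
            ∃ e : Q ≃ₗ[A₀] (E ⧸ kerSMulSubmodule π E),
              ∀ q : Q, e q = Submodule.Quotient.mk (ι q)) ∧
    (∀ (P : Type u) [AddCommGroup P] [Module A P], Module.Finite A P →
      Module.Projective A P →
        Module.Finite A₀ (P ⧸ kerSMulSubmodule π P) ∧
        Module.Projective A₀ (P ⧸ kerSMulSubmodule π P) ∧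
        ∀ (E : Type u) [AddCommGroup E] [Module A E]
          (ι : (P ⧸ kerSMulSubmodule π P) →ₗ[A₀] E),
          IsBaseChangeAlong A A₀ (P ⧸ kerSMulSubmodule π P) E ι →
            Nonempty (E ≃ₗ[A] P)) := by
  refine ⟨fun Q _ _ _ _ E _ _ ι h => ?_, fun P _ _ _ _ => ?_⟩
  · exact ⟨h.finite, h.projective, h.exists_linearEquiv_quotient_kerSMulSubmodule hπ⟩
  · exact ⟨finite_quotient_kerSMulSubmodule hπ, projective_quotient_kerSMulSubmodule hπ,
      fun E _ _ ι h => nonempty_linearEquiv_of_isBaseChangeAlong_quotient hπ hNak h⟩
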